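/- Let G be a connected graph of order divisible by 2. Then G^2 contains a K_2-factor; equivalently, V(G) can be partitioned into pairs of vertices at distance at most 2 in G. -/

import Mathlib

open SimpleGraph Finset

/-- The `k`-th power of a graph `G`: two vertices are adjacent iff they are distinct
and at distance at most `k` in `G`. -/
def gpow {V : Type*} (G : SimpleGraph V) (k : ℕ) : SimpleGraph V where
  Adj u v := u ≠ v ∧ G.dist u v ≤ k
  symm := ⟨fun u v h => ⟨h.1.symm, by rw [SimpleGraph.dist_comm]; exact h.2⟩⟩
  loopless := ⟨fun u h => h.1 rfl⟩

/-- `H` contains a `K_r`-factor: a partition of the vertex set into parts of size `r`,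
each inducing a clique in `H`. -/
def HasCliqueFactor {V : Type*} [Fintype V] [DecidableEq V] (H : SimpleGraph V) (r : ℕ) : Prop :=
  ∃ P : Finpartition (Finset.univ : Finset V),
    ∀ p ∈ P.parts, p.card = r ∧ H.IsClique (p : Set V)

/-- `A` is contained in a subtree of `G` of order at most `m`. -/
def InSubtree {V : Type*} (G : SimpleGraph V) (A : Set V) (m : ℕ) : Prop :=
  ∃ T : G.Subgraph, T.coe.IsTree ∧ A ⊆ T.verts ∧ T.verts.ncard ≤ m

/-- `G` is `k`-connected: more than `k` vertices, and deleting any fewer than `k`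
vertices leaves a connected graph. -/
def KConnected {V : Type*} (k : ℕ) (G : SimpleGraph V) : Prop :=
  k < Nat.card V ∧ ∀ S : Set V, S.ncard < k → (G.induce Sᶜ).Connected

/-!
Root `G` at `r`, let `u` be a vertex farthest from `r` and `p` a neighbour of `u` one step
closer to `r`. If `p` has another neighbour `w` as far from `r` as `u`, set `c = w`; otherwise
set `c = p`. Then `u` and `c` are at distance at most `2`, and every vertex outside `{u, c}`
other than `r` still has a neighbour outside `{u, c}` one step closer to `r`, so `G - {u, c}`
stays connected and induction on the order pairs up the remaining vertices.
-/

namespace SimpleGraph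

variable {V W : Type*} {G : SimpleGraph V}

lemma Reachable.dist_map_le {G' : SimpleGraph W} (f : G →g G') {u v : V} (h : G.Reachable u v) :
    G'.dist (f u) (f v) ≤ G.dist u v := by
  obtain ⟨p, hp⟩ := h.exists_walk_length_eq_dist
  simpa [hp] using dist_le (p.map f)

lemma Connected.exists_adj_dist_add_one_eq (hG : G.Connected) {r x : V} (hx : x ≠ r) :
    ∃ y, G.Adj x y ∧ G.dist r y + 1 = G.dist r x := by
  obtain ⟨p, hp⟩ := hG.exists_walk_length_eq_dist x r
  cases p with
  | nil => exact absurd rfl hx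
  | @cons _ y _ hxy q =>
    refine ⟨y, hxy, le_antisymm ?_ ?_⟩
    · rw [dist_comm, dist_comm (u := r), ← hp, Walk.length_cons]
      exact Nat.succ_le_succ (dist_le q)
    · calc G.dist r x ≤ G.dist r y + G.dist y x := hG.dist_triangle
        _ = G.dist r y + 1 := by rw [dist_eq_one_iff_adj.mpr hxy.symm]

lemma preconnected_induce_of_descent {T : Set V} (r : V) (f : V → ℕ)
    (h : ∀ x ∈ T, x ≠ r → ∃ y ∈ T, G.Adj x y ∧ f y < f x) : (G.induce T).Preconnected := by
  have reach : ∀ n, ∀ x (hx : x ∈ T), f x = n →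
      ∃ hr : r ∈ T, (G.induce T).Reachable ⟨x, hx⟩ ⟨r, hr⟩ := by
    intro n
    induction n using Nat.strong_induction_on with
    | _ n ih =>
      intro x hx hn
      by_cases hxr : x = r
      · subst hxr
        exact ⟨hx, .rfl⟩
      obtain ⟨y, hy, hxy, hlt⟩ := h x hx hxr
      obtain ⟨hr, hyr⟩ := ih _ (hn ▸ hlt) y hy rfl
      exact ⟨hr, (show (G.induce T).Adj ⟨x, hx⟩ ⟨y, hy⟩ from hxy).reachable.trans hyr⟩
  rintro ⟨x, hx⟩ ⟨y, hy⟩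
  obtain ⟨hr, hxr⟩ := reach _ x hx rfl
  obtain ⟨_, hyr⟩ := reach _ y hy rfl
  exact hxr.trans hyr.symm

lemma Connected.preconnected_induce_compl (hG : G.Connected) (r : V) {S : Set V}
    (hS : ∀ x ∉ S, ∀ y ∈ S, G.Adj x y → G.dist r y + 1 ≠ G.dist r x) :
    (G.induce Sᶜ).Preconnected := by
  refine preconnected_induce_of_descent r (G.dist r) fun x hx hxr => ?_
  obtain ⟨y, hxy, hy⟩ := hG.exists_adj_dist_add_one_eq hxr
  exact ⟨y, fun hyS => hS x hx y hyS hxy hy, hxy, by omega⟩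

lemma Connected.exists_dist_le_two_preconnected_induce_compl [Finite V] [Nontrivial V]
    (hG : G.Connected) :
    ∃ u c, u ≠ c ∧ G.dist u c ≤ 2 ∧ (G.induce {u, c}ᶜ).Preconnected := by
  obtain ⟨r⟩ := hG.nonempty
  obtain ⟨u, hu⟩ := Finite.exists_max (G.dist r)
  have hur : u ≠ r := by
    rintro rfl
    obtain ⟨x, hx⟩ := exists_ne u
    have hux : G.dist u x = 0 := by simpa using hu x
    exact hx (hG.dist_eq_zero_iff.mp hux).symm
  obtain ⟨p, hup, hp⟩ := hG.exists_adj_dist_add_one_eq hur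
  have far : ∀ x y, G.Adj x y → G.dist r u ≤ G.dist r y → G.dist r y + 1 ≠ G.dist r x :=
    fun x y _ hy h => by have := hu x; omega
  by_cases hw : ∃ w, w ≠ u ∧ G.Adj p w ∧ G.dist r w = G.dist r u
  · obtain ⟨w, hwu, hpw, hw⟩ := hw
    refine ⟨u, w, hwu.symm, ?_, hG.preconnected_induce_compl r ?_⟩
    · simpa using dist_le (hup.toWalk.concat hpw)
    · rintro x - y (rfl | rfl) hxy
      exacts [far x _ hxy le_rfl, far x _ hxy hw.ge]
  · refine ⟨u, p, hup.ne, (dist_eq_one_iff_adj.mpr hup).trans_le one_le_two,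
      hG.preconnected_induce_compl r ?_⟩
    rintro x hx y (rfl | rfl) hxy
    · exact far x _ hxy le_rfl
    · -- a neighbour of `p` one step further from `r` lies at maximal distance, so it is `u`
      intro h
      exact hw ⟨x, fun hxu => hx (.inl hxu), hxy.symm, by omega⟩

end SimpleGraph

section Pairing

variable {V : Type*} [DecidableEq V] {G : SimpleGraph V}

lemma exists_dist_le_two_preconnected_induce_sdiff {s : Finset V}
    (hs : (G.induce (s : Set V)).Connected) (hcard : 1 < s.card) :
    ∃ u ∈ s, ∃ c ∈ s, u ≠ c ∧ G.dist u c ≤ 2 ∧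
      (G.induce ((s \ {u, c} : Finset V) : Set V)).Preconnected := by
  have : Nontrivial (s : Set V) :=
    Set.nontrivial_coe_sort.mpr (Finset.one_lt_card_iff_nontrivial.mp hcard)
  obtain ⟨u, c, huc, hdist, hpre⟩ := hs.exists_dist_le_two_preconnected_induce_compl
  refine ⟨u, u.2, c, c.2, Subtype.coe_ne_coe.mpr huc,
    ((hs.preconnected u c).dist_map_le (Embedding.induce _).toHom).trans hdist, ?_⟩
  refine hpre.map ⟨fun x => ⟨x.1.1, ?_⟩, fun h => h⟩ ?_
  · obtain ⟨⟨x, hxs⟩, hx⟩ := x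
    have hxu : x ≠ u := fun h => hx (.inl (Subtype.ext h))
    have hxc : x ≠ c := fun h => hx (.inr (Subtype.ext h))
    simp [hxs, hxu, hxc]
  · rintro ⟨x, hx⟩
    simp only [coe_sdiff, coe_insert, coe_singleton, Set.mem_sdiff, Set.mem_insert_iff,
      Set.mem_singleton_iff, not_or, mem_coe] at hx
    refine ⟨⟨⟨x, hx.1⟩, ?_⟩, rfl⟩
    rintro (h | h)
    exacts [hx.2.1 (congrArg Subtype.val h), hx.2.2 (congrArg Subtype.val h)]

lemma exists_finpartition_pairs_gpow_two (s : Finset V)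
    (hs : (G.induce (s : Set V)).Preconnected) (heven : 2 ∣ s.card) :
    ∃ P : Finpartition s, ∀ p ∈ P.parts, p.card = 2 ∧ (gpow G 2).IsClique (p : Set V) := by
  induction s using Finset.strongInduction with
  | _ s ih =>
  rcases s.eq_empty_or_nonempty with rfl | hne
  · exact ⟨Finpartition.empty _, by simp⟩
  have : Nonempty (s : Set V) := hne.coe_sort
  have hcard : 1 < s.card := by
    obtain ⟨k, hk⟩ := heven
    have := hne.card_pos
    omega
  obtain ⟨u, hu, c, hc, huc, hdist, hpre⟩ :=
    exists_dist_le_two_preconnected_induce_sdiff ⟨hs⟩ hcard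
  have hsub : {u, c} ⊆ s := insert_subset hu (singleton_subset_iff.mpr hc)
  obtain ⟨P, hP⟩ := ih (s \ {u, c}) (sdiff_ssubset hsub (insert_nonempty _ _)) hpre
    (by rw [card_sdiff_of_subset hsub, card_pair huc]; omega)
  refine ⟨P.extend (insert_ne_empty u {c}) sdiff_disjoint (sdiff_union_of_subset hsub), ?_⟩
  intro t ht
  rw [Finpartition.extend_parts, mem_insert] at ht
  rcases ht with rfl | ht
  · refine ⟨card_pair huc, ?_⟩
    rw [coe_pair, isClique_pair]
    exact fun _ => ⟨huc, hdist⟩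
  · exact hP t ht

end Pairing

theorem square_has_K2_factor {V : Type*} [Fintype V] [DecidableEq V] (G : SimpleGraph V)
    (hG : G.Connected) (hdvd : 2 ∣ Fintype.card V) :
    HasCliqueFactor (gpow G 2) 2 := by
  refine exists_finpartition_pairs_gpow_two univ ?_ (by simpa using hdvd)
  rintro ⟨x, -⟩ ⟨y, -⟩
  obtain ⟨p⟩ := hG.preconnected x y
  exact ⟨p.induce _ fun z _ => mem_coe.mpr (mem_univ z)⟩
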